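/- Let p be an odd prime and consider the permutations of ℤ_p × ℤ_4 given by μ(i,j) = (i+1,j), σν(i,j) = (-i,j+1), and τ(i,j) = (-i,-j), and let H = ⟨μ, σν, τ⟩, a subgroup of the symmetric group on ℤ_p × ℤ_4. Then the minimal normal subgroups of H are exactly ⟨μ⟩ and ⟨ν²⟩, where ν² is the permutation (i,j) ↦ (i,j+2). -/

import Mathlib

open SimpleGraph

namespace OG4

variable {V : Type*} {W : Type*}

/-! ### Normal quotients, cycles, and basic pairs -/

/-- The setoid of orbits of a group `N` of permutations of `V`. -/
def orbitSetoid (N : Subgroup (Equiv.Perm V)) : Setoid V := MulAction.orbitRel N V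

/-- The (normal) quotient graph of a graph `Γ` with respect to a group `N` of permutations:
its vertices are the `N`-orbits, two distinct orbits being adjacent iff some vertex of one is
adjacent in `Γ` to some vertex of the other. -/
def quotientGraph (Γ : SimpleGraph V) (N : Subgroup (Equiv.Perm V)) :
    SimpleGraph (Quotient (orbitSetoid N)) :=
  SimpleGraph.fromRel fun a b =>
    ∃ x y : V, Quotient.mk (orbitSetoid N) x = a ∧ Quotient.mk (orbitSetoid N) y = b ∧ Γ.Adj x y

/-- `N` is a normal subgroup of the subgroup `G` (of some ambient group). -/
def NormalIn {G : Type*} [Group G] (N H : Subgroup G) : Prop :=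
  N ≤ H ∧ ∀ h ∈ H, ∀ n ∈ N, h * n * h⁻¹ ∈ N

/-- A graph is isomorphic to a cycle graph `C_m` for some `m ≥ 3`. -/
def IsoCycle (Δ : SimpleGraph W) : Prop :=
  ∃ m : ℕ, 3 ≤ m ∧ Nonempty (Δ ≃g SimpleGraph.cycleGraph m)

/-- Every normal quotient of `(Γ, G)` relative to a nontrivial normal subgroup is degenerate:
it has at most 2 vertices or is a cycle. -/
def IsBasic (Γ : SimpleGraph V) (G : Subgroup (Equiv.Perm V)) : Prop :=
  ∀ N : Subgroup (Equiv.Perm V), NormalIn N G → N ≠ ⊥ →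
    Nat.card (Quotient (orbitSetoid N)) ≤ 2 ∨ IsoCycle (quotientGraph Γ N)

/-- `(Γ, G)` is basic of cycle type. -/
def BasicOfCycleType (Γ : SimpleGraph V) (G : Subgroup (Equiv.Perm V)) : Prop :=
  IsBasic Γ G ∧
    ∃ N : Subgroup (Equiv.Perm V), NormalIn N G ∧ N ≠ ⊥ ∧ IsoCycle (quotientGraph Γ N)

/-- The kernel of the action of `G` on the set of `N`-orbits. -/
def orbitKernel (G N : Subgroup (Equiv.Perm V)) : Subgroup (Equiv.Perm V) where
  carrier := {g | g ∈ G ∧ ∀ x : V,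
    Quotient.mk (orbitSetoid N) (g x) = Quotient.mk (orbitSetoid N) x}
  one_mem' := ⟨G.one_mem, fun x => by simp⟩
  mul_mem' := by
    rintro a b ⟨haG, ha⟩ ⟨hbG, hb⟩
    refine ⟨G.mul_mem haG hbG, fun x => ?_⟩
    rw [Equiv.Perm.mul_apply, ha (b x), hb x]
  inv_mem' := by
    rintro a ⟨haG, ha⟩
    refine ⟨G.inv_mem haG, fun x => ?_⟩
    have h := ha (a⁻¹ x)
    rw [show a (a⁻¹ x) = x from a.apply_symm_apply x] at h
    exact h.symm

/-- `(Γ, G)` has a pair of independent cyclic normal quotients. -/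
def HasIndepCyclicQuotients (Γ : SimpleGraph V) (G : Subgroup (Equiv.Perm V)) : Prop :=
  ∃ N M : Subgroup (Equiv.Perm V), NormalIn N G ∧ NormalIn M G ∧
    IsoCycle (quotientGraph Γ N) ∧ IsoCycle (quotientGraph Γ M) ∧
    ¬ IsoCycle (quotientGraph Γ (orbitKernel G N ⊓ orbitKernel G M))

/-- `(Γ, G)` is basic of independent-cycle type. -/
def BasicOfIndependentCycleType (Γ : SimpleGraph V) (G : Subgroup (Equiv.Perm V)) : Prop :=
  IsBasic Γ G ∧ HasIndepCyclicQuotients Γ G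

/-- Isomorphism of graph-group pairs: a graph isomorphism conjugating one group onto the other. -/
def PairIso (Γ : SimpleGraph V) (G : Subgroup (Equiv.Perm V))
    (Δ : SimpleGraph W) (H : Subgroup (Equiv.Perm W)) : Prop :=
  ∃ e : Γ ≃g Δ, ∀ h : Equiv.Perm W, h ∈ H ↔ ∃ g ∈ G, e.toEquiv.permCongr g = h

/-! ### Minimal normal subgroups -/

/-- `M` is a minimal normal subgroup of the ambient group. -/
def IsMinimalNormal {G : Type*} [Group G] (M : Subgroup G) : Prop :=
  M.Normal ∧ M ≠ ⊥ ∧ ∀ N : Subgroup G, N.Normal → N ≤ M → N = ⊥ ∨ N = M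

/-- `M` is a minimal normal subgroup of the subgroup `H`. -/
def IsMinimalNormalIn {G : Type*} [Group G] (M H : Subgroup G) : Prop :=
  NormalIn M H ∧ M ≠ ⊥ ∧ ∀ N : Subgroup G, NormalIn N H → N ≤ M → N = ⊥ ∨ N = M

/-! ### The graphs `Γ(r,s)` and their automorphisms -/

/-- In `Γ(r,s)`, the vertex `(i,j)` is joined to the four vertices `(i ± 1, j ± 1)`. -/
def gammaRel (r s : ℕ) (x y : ZMod r × ZMod s) : Prop :=
  (y.1 = x.1 + 1 ∨ y.1 = x.1 - 1) ∧ (y.2 = x.2 + 1 ∨ y.2 = x.2 - 1)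

/-- The graph `Γ(r,s)` on `ℤ_r × ℤ_s`. -/
def Gamma (r s : ℕ) : SimpleGraph (ZMod r × ZMod s) := SimpleGraph.fromRel (gammaRel r s)

/-- `μ : (i,j) ↦ (i+1, j)`. -/
def mu (r s : ℕ) : Equiv.Perm (ZMod r × ZMod s) :=
  (Equiv.addRight (1 : ZMod r)).prodCongr (Equiv.refl (ZMod s))

/-- `ν : (i,j) ↦ (i, j+1)`. -/
def nu (r s : ℕ) : Equiv.Perm (ZMod r × ZMod s) :=
  (Equiv.refl (ZMod r)).prodCongr (Equiv.addRight (1 : ZMod s))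

/-- `σ : (i,j) ↦ (-i, j)`. -/
def sigma (r s : ℕ) : Equiv.Perm (ZMod r × ZMod s) :=
  (Equiv.neg (ZMod r)).prodCongr (Equiv.refl (ZMod s))

/-- `τ : (i,j) ↦ (-i, -j)`. -/
def tau (r s : ℕ) : Equiv.Perm (ZMod r × ZMod s) :=
  (Equiv.neg (ZMod r)).prodCongr (Equiv.neg (ZMod s))

/-- `σν : (i,j) ↦ (-i, j+1)`. -/
def sigmaNu (r s : ℕ) : Equiv.Perm (ZMod r × ZMod s) :=
  (Equiv.neg (ZMod r)).prodCongr (Equiv.addRight (1 : ZMod s))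

/-- `μν : (i,j) ↦ (i+1, j+1)`. -/
def muNu (r s : ℕ) : Equiv.Perm (ZMod r × ZMod s) :=
  (Equiv.addRight (1 : ZMod r)).prodCongr (Equiv.addRight (1 : ZMod s))

/-- `σμν : (i,j) ↦ (-(i+1), j+1)`. -/
def sigmaMuNu (r s : ℕ) : Equiv.Perm (ZMod r × ZMod s) :=
  ((Equiv.addRight (1 : ZMod r)).trans (Equiv.neg (ZMod r))).prodCongr
    (Equiv.addRight (1 : ZMod s))

/-- `μ² : (i,j) ↦ (i+2, j)`. -/
def muSq (r s : ℕ) : Equiv.Perm (ZMod r × ZMod s) :=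
  (Equiv.addRight (2 : ZMod r)).prodCongr (Equiv.refl (ZMod s))

/-- `ν² : (i,j) ↦ (i, j+2)`. -/
def nuSq (r s : ℕ) : Equiv.Perm (ZMod r × ZMod s) :=
  (Equiv.refl (ZMod r)).prodCongr (Equiv.addRight (2 : ZMod s))

/-- `μ^k : (i,j) ↦ (i+k, j)`. -/
def muPow (r s k : ℕ) : Equiv.Perm (ZMod r × ZMod s) :=
  (Equiv.addRight ((k : ZMod r))).prodCongr (Equiv.refl (ZMod s))

/-- `μ^k ν² : (i,j) ↦ (i+k, j+2)`. -/
def muPowNuSq (r s k : ℕ) : Equiv.Perm (ZMod r × ZMod s) :=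
  (Equiv.addRight ((k : ZMod r))).prodCongr (Equiv.addRight (2 : ZMod s))

/-- `G(r,s) = ⟨μ, ν, σ⟩`. -/
def Ggroup (r s : ℕ) : Subgroup (Equiv.Perm (ZMod r × ZMod s)) :=
  Subgroup.closure {mu r s, nu r s, sigma r s}

/-- `H(r,s) = ⟨μ, σν, τ⟩`. -/
def Hgroup (r s : ℕ) : Subgroup (Equiv.Perm (ZMod r × ZMod s)) :=
  Subgroup.closure {mu r s, sigmaNu r s, tau r s}

/-! ### The graphs `Γ⁺(r,s)` (for `r`, `s` even) -/

/-- `X⁺`: the set of `(i,j)` with `i` and `j` of the same parity. -/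
def XPlus (r s : ℕ) : Set (ZMod r × ZMod s) := {x | x.1.val % 2 = x.2.val % 2}

/-- `Γ⁺(r,s)`, the subgraph of `Γ(r,s)` induced on `X⁺`. -/
def GammaPlus (r s : ℕ) : SimpleGraph (XPlus r s) :=
  SimpleGraph.induce (XPlus r s) (Gamma r s)

section parity

lemma val_add_one_mod_two (r : ℕ) (hr : 2 ∣ r) (hr0 : r ≠ 0) (i : ZMod r) :
    (i + 1).val % 2 = (i.val + 1) % 2 := by
  haveI : NeZero r := ⟨hr0⟩
  haveI : Fact (1 < r) := ⟨by have := Nat.le_of_dvd (Nat.pos_of_ne_zero hr0) hr; omega⟩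
  rw [ZMod.val_add, Nat.mod_mod_of_dvd _ hr, ZMod.val_one]

lemma val_add_two_mod_two (r : ℕ) (hr : 2 ∣ r) (hr0 : r ≠ 0) (i : ZMod r) :
    (i + 2).val % 2 = i.val % 2 := by
  have h1 := val_add_one_mod_two r hr hr0 i
  have h2 := val_add_one_mod_two r hr hr0 (i + 1)
  rw [show i + 1 + 1 = i + 2 by ring] at h2
  omega

lemma val_neg_mod_two (r : ℕ) (hr : 2 ∣ r) (hr0 : r ≠ 0) (i : ZMod r) :
    (-i).val % 2 = i.val % 2 := by
  haveI : NeZero r := ⟨hr0⟩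
  rcases eq_or_ne i 0 with h | h
  · simp [h]
  · have h1 : (-i).val = r - i.val := by rw [ZMod.neg_val]; simp [h]
    have h2 : i.val < r := ZMod.val_lt i
    have h3 : i.val ≠ 0 := fun hh => h ((ZMod.val_eq_zero i).mp hh)
    obtain ⟨t, rfl⟩ := hr
    rw [h1]
    omega

end parity

section plusPerms

variable (r s : ℕ)

/-- The restriction of `μ²` to `X⁺`. -/
def muSqP (hr : 2 ∣ r) (hr0 : r ≠ 0) : Equiv.Perm (XPlus r s) :=
  (muSq r s).subtypePerm (by
    intro x
    have h := val_add_two_mod_two r hr hr0 x.1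
    simp only [XPlus, Set.mem_setOf_eq, muSq, Equiv.prodCongr_apply, Prod.map,
      Equiv.coe_addRight, Equiv.refl_apply]
    omega)

/-- The restriction of `ν²` to `X⁺`. -/
def nuSqP (hs : 2 ∣ s) (hs0 : s ≠ 0) : Equiv.Perm (XPlus r s) :=
  (nuSq r s).subtypePerm (by
    intro x
    have h := val_add_two_mod_two s hs hs0 x.2
    simp only [XPlus, Set.mem_setOf_eq, nuSq, Equiv.prodCongr_apply, Prod.map,
      Equiv.coe_addRight, Equiv.refl_apply]
    omega)

/-- The restriction of `μν` to `X⁺`. -/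
def muNuP (hr : 2 ∣ r) (hr0 : r ≠ 0) (hs : 2 ∣ s) (hs0 : s ≠ 0) : Equiv.Perm (XPlus r s) :=
  (muNu r s).subtypePerm (by
    intro x
    have h1 := val_add_one_mod_two r hr hr0 x.1
    have h2 := val_add_one_mod_two s hs hs0 x.2
    simp only [XPlus, Set.mem_setOf_eq, muNu, Equiv.prodCongr_apply, Prod.map,
      Equiv.coe_addRight]
    omega)

/-- The restriction of `σ` to `X⁺`. -/
def sigmaP (hr : 2 ∣ r) (hr0 : r ≠ 0) : Equiv.Perm (XPlus r s) :=
  (sigma r s).subtypePerm (by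
    intro x
    have h := val_neg_mod_two r hr hr0 x.1
    simp only [XPlus, Set.mem_setOf_eq, sigma, Equiv.prodCongr_apply, Prod.map,
      Equiv.neg_apply, Equiv.refl_apply]
    omega)

/-- The restriction of `τ` to `X⁺`. -/
def tauP (hr : 2 ∣ r) (hr0 : r ≠ 0) (hs : 2 ∣ s) (hs0 : s ≠ 0) : Equiv.Perm (XPlus r s) :=
  (tau r s).subtypePerm (by
    intro x
    have h1 := val_neg_mod_two r hr hr0 x.1
    have h2 := val_neg_mod_two s hs hs0 x.2
    simp only [XPlus, Set.mem_setOf_eq, tau, Equiv.prodCongr_apply, Prod.map,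
      Equiv.neg_apply]
    omega)

/-- The restriction of `σμν` to `X⁺`. -/
def sigmaMuNuP (hr : 2 ∣ r) (hr0 : r ≠ 0) (hs : 2 ∣ s) (hs0 : s ≠ 0) :
    Equiv.Perm (XPlus r s) :=
  (sigmaMuNu r s).subtypePerm (by
    intro x
    have h1 := val_neg_mod_two r hr hr0 (x.1 + 1)
    have h2 := val_add_one_mod_two r hr hr0 x.1
    have h3 := val_add_one_mod_two s hs hs0 x.2
    simp only [XPlus, Set.mem_setOf_eq, sigmaMuNu, Equiv.prodCongr_apply, Prod.map,
      Equiv.trans_apply, Equiv.coe_addRight, Equiv.neg_apply]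
    omega)

/-- `G⁺(r,s) = ⟨μ², μν, σ⟩` acting on `X⁺`. -/
def GPlusGroup (hr : 2 ∣ r) (hr0 : r ≠ 0) (hs : 2 ∣ s) (hs0 : s ≠ 0) :
    Subgroup (Equiv.Perm (XPlus r s)) :=
  Subgroup.closure {muSqP r s hr hr0, muNuP r s hr hr0 hs hs0, sigmaP r s hr hr0}

/-- `H⁺(r,s) = ⟨μ², σμν, τ⟩` acting on `X⁺`. -/
def HPlusGroup (hr : 2 ∣ r) (hr0 : r ≠ 0) (hs : 2 ∣ s) (hs0 : s ≠ 0) :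
    Subgroup (Equiv.Perm (XPlus r s)) :=
  Subgroup.closure
    {muSqP r s hr hr0, sigmaMuNuP r s hr hr0 hs hs0, tauP r s hr hr0 hs hs0}

end plusPerms

/-! ### The standard double cover `Γ₂(r,s)` -/

/-- Adjacency of the double cover: `(i,j)_δ ~ (i ± 1, j ± 1)_{δ+1}`. -/
def gamma2Rel (r s : ℕ) (x y : (ZMod r × ZMod s) × ZMod 2) : Prop :=
  (y.1.1 = x.1.1 + 1 ∨ y.1.1 = x.1.1 - 1) ∧ (y.1.2 = x.1.2 + 1 ∨ y.1.2 = x.1.2 - 1) ∧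
    y.2 = x.2 + 1

/-- `Γ₂(r,s)`, the standard double cover of `Γ(r,s)`. -/
def Gamma2 (r s : ℕ) : SimpleGraph ((ZMod r × ZMod s) × ZMod 2) :=
  SimpleGraph.fromRel (gamma2Rel r s)

/-- `μ : (i,j)_δ ↦ (i+1, j)_δ` on the double cover. -/
def muD (r s : ℕ) : Equiv.Perm ((ZMod r × ZMod s) × ZMod 2) :=
  (mu r s).prodCongr (Equiv.refl (ZMod 2))

/-- `ν : (i,j)_δ ↦ (i, j+1)_δ` on the double cover. -/
def nuD (r s : ℕ) : Equiv.Perm ((ZMod r × ZMod s) × ZMod 2) :=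
  (nu r s).prodCongr (Equiv.refl (ZMod 2))

/-- `σ : (i,j)_δ ↦ (i, -j)_{δ+1}` on the double cover. -/
def sigmaD (r s : ℕ) : Equiv.Perm ((ZMod r × ZMod s) × ZMod 2) :=
  ((Equiv.refl (ZMod r)).prodCongr (Equiv.neg (ZMod s))).prodCongr
    (Equiv.addRight (1 : ZMod 2))

/-- `τ : (i,j)_δ ↦ (-i, -j)_δ` on the double cover. -/
def tauD (r s : ℕ) : Equiv.Perm ((ZMod r × ZMod s) × ZMod 2) :=
  (tau r s).prodCongr (Equiv.refl (ZMod 2))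

/-- `G₂(r,s) = ⟨μ, ν, σ, τ⟩` on the double cover. -/
def G2group (r s : ℕ) : Subgroup (Equiv.Perm ((ZMod r × ZMod s) × ZMod 2)) :=
  Subgroup.closure {muD r s, nuD r s, sigmaD r s, tauD r s}

/-!
Every element of `H(p,4)` has the form `(i, j) ↦ (±i + a, ±j + b)`, and commutators of such maps
are translations. Let `m ≠ 1` lie in a normal subgroup `N` of `H`. If `m` negates `i`, then `⁅μ, m⁆`
is the translation by `(2, 0)`. If `m` negates only `j`, then `⁅σν, m⁆ m² = ν²`. If `m` is the
translation by `(a, b)`, then `⁅σν, m⁆` is the translation by `(-2a, 0)`, and for `a = 0` one of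
`m`, `m²` is `ν²`. Since `p` is an odd prime, `N` thus contains `μ` or `ν²`; as `⟨μ⟩` and `⟨ν²⟩` are
normal in `H` and neither contains the generator of the other, they are exactly the minimal normal
subgroups.
-/

open scoped commutatorElement

section NormalIn

variable {G : Type*} [Group G] {H N M : Subgroup G} {g n a b : G}

lemma NormalIn.commutatorElement_mem (hN : NormalIn N H) (hg : g ∈ H) (hn : n ∈ N) :
    ⁅g, n⁆ ∈ N := by
  rw [commutatorElement_def]
  exact N.mul_mem (hN.2 g hg n hn) (N.inv_mem hn)

lemma normalIn_closure_singleton (hg : g ∈ H)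
    (hconj : ∀ h ∈ H, h * g * h⁻¹ ∈ Subgroup.zpowers g) :
    NormalIn (Subgroup.closure {g}) H := by
  refine ⟨(Subgroup.closure_le H).2 (Set.singleton_subset_iff.2 hg), fun h hh n hn => ?_⟩
  rw [← Subgroup.zpowers_eq_closure] at hn ⊢
  obtain ⟨k, rfl⟩ := Subgroup.mem_zpowers_iff.1 hn
  rw [← conj_zpow]
  exact Subgroup.zpow_mem _ (hconj h hh) k

lemma IsMinimalNormalIn.eq_closure_singleton (hM : IsMinimalNormalIn M H)
    (ha : NormalIn (Subgroup.closure {a}) H) (ha1 : a ≠ 1) (haM : a ∈ M) :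
    M = Subgroup.closure {a} := by
  rcases hM.2.2 _ ha ((Subgroup.closure_le M).2 (Set.singleton_subset_iff.2 haM)) with h | h
  · exact absurd (Subgroup.closure_eq_bot_iff.1 h rfl) ha1
  · exact h.symm

lemma isMinimalNormalIn_closure_singleton (ha : NormalIn (Subgroup.closure {a}) H) (ha1 : a ≠ 1)
    (hb : b ∉ Subgroup.closure {a}) (hab : ∀ N, NormalIn N H → N ≠ ⊥ → a ∈ N ∨ b ∈ N) :
    IsMinimalNormalIn (Subgroup.closure {a}) H := by
  refine ⟨ha, fun h => ha1 (Subgroup.closure_eq_bot_iff.1 h rfl), fun N hN hNa => ?_⟩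
  refine (eq_or_ne N ⊥).imp_right fun hN1 => le_antisymm hNa ?_
  rcases hab N hN hN1 with haN | hbN
  · exact (Subgroup.closure_le N).2 (Set.singleton_subset_iff.2 haN)
  · exact absurd (hNa hbN) hb

theorem isMinimalNormalIn_iff_of_forall_mem_or_mem
    (ha : NormalIn (Subgroup.closure {a}) H) (hb : NormalIn (Subgroup.closure {b}) H)
    (ha_b : a ∉ Subgroup.closure {b}) (hb_a : b ∉ Subgroup.closure {a})
    (hab : ∀ N, NormalIn N H → N ≠ ⊥ → a ∈ N ∨ b ∈ N) :
    IsMinimalNormalIn M H ↔ M = Subgroup.closure {a} ∨ M = Subgroup.closure {b} := by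
  have ha1 : a ≠ 1 := fun h => ha_b (h ▸ one_mem _)
  have hb1 : b ≠ 1 := fun h => hb_a (h ▸ one_mem _)
  constructor
  · intro hM
    exact (hab M hM.1 hM.2.1).imp (hM.eq_closure_singleton ha ha1) (hM.eq_closure_singleton hb hb1)
  · rintro (rfl | rfl)
    · exact isMinimalNormalIn_closure_singleton ha ha1 hb_a hab
    · exact isMinimalNormalIn_closure_singleton hb hb1 ha_b fun N hN hN1 => (hab N hN hN1).symm

end NormalIn

section SignedAffine

variable {A B : Type*} [AddCommGroup A] [AddCommGroup B]

def signedAffine (e d : ℤˣ) (a : A) (b : B) : Equiv.Perm (A × B) :=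
  Equiv.addRight (a, b) * (MulAction.toPerm e).prodCongr (MulAction.toPerm d)

variable (e d e' d' : ℤˣ) (a a' : A) (b b' : B)

@[simp]
lemma signedAffine_apply (x : A × B) :
    signedAffine e d a b x = (e • x.1 + a, d • x.2 + b) := rfl

lemma signedAffine_one_one : signedAffine (1 : ℤˣ) 1 a b = Equiv.addRight (a, b) := by
  ext x <;> simp

lemma signedAffine_mul :
    signedAffine e d a b * signedAffine e' d' a' b' =
      signedAffine (e * e') (d * d') (e • a' + a) (d • b' + b) := by
  ext x <;> simp [smul_add, mul_smul, add_assoc]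

lemma signedAffine_inv :
    (signedAffine e d a b)⁻¹ = signedAffine e d (-(e • a)) (-(d • b)) := by
  refine inv_eq_of_mul_eq_one_right ?_
  ext x <;> simp [smul_add, smul_smul, Int.units_mul_self]

lemma commutatorElement_signedAffine :
    ⁅signedAffine e d a b, signedAffine e' d' a' b'⁆ =
      Equiv.addRight (a - e' • a - (a' - e • a'), b - d' • b - (b' - d • b')) := by
  rw [commutatorElement_def, signedAffine_inv, signedAffine_inv]
  ext x <;>
    simp only [Equiv.Perm.mul_apply, signedAffine_apply, Equiv.coe_addRight, Prod.fst_add,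
      Prod.snd_add] <;>
    rcases Int.units_eq_one_or e with rfl | rfl <;> rcases Int.units_eq_one_or e' with rfl | rfl <;>
    rcases Int.units_eq_one_or d with rfl | rfl <;> rcases Int.units_eq_one_or d' with rfl | rfl <;>
    simp <;> abel

lemma signedAffine_conj_addRight (v : A × B) :
    signedAffine e d a b * Equiv.addRight v * (signedAffine e d a b)⁻¹ =
      Equiv.addRight (e • v.1, d • v.2) := by
  rw [signedAffine_inv]
  ext x <;> simp [smul_add, smul_smul, Int.units_mul_self] <;> abel

variable (A B) in
def signedAffineGroup : Subgroup (Equiv.Perm (A × B)) where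
  carrier := {g | ∃ e d a b, signedAffine e d a b = g}
  one_mem' := ⟨1, 1, 0, 0, by rw [signedAffine_one_one, Prod.mk_zero_zero, Equiv.addRight_zero]⟩
  mul_mem' := by
    rintro _ _ ⟨e, d, a, b, rfl⟩ ⟨e', d', a', b', rfl⟩
    exact ⟨_, _, _, _, (signedAffine_mul ..).symm⟩
  inv_mem' := by
    rintro _ ⟨e, d, a, b, rfl⟩
    exact ⟨_, _, _, _, (signedAffine_inv ..).symm⟩

end SignedAffine

section Hgroup

variable (r s : ℕ)

lemma mu_eq_addRight : mu r s = Equiv.addRight ((1 : ZMod r), (0 : ZMod s)) := by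
  ext x <;> simp [mu]

lemma nuSq_eq_addRight : nuSq r s = Equiv.addRight ((0 : ZMod r), (2 : ZMod s)) := by
  ext x <;> simp [nuSq]

lemma sigmaNu_eq_signedAffine : sigmaNu r s = signedAffine (-1) 1 (0 : ZMod r) (1 : ZMod s) := by
  ext x <;> simp [sigmaNu]

lemma tau_eq_signedAffine : tau r s = signedAffine (-1) (-1) (0 : ZMod r) (0 : ZMod s) := by
  ext x <;> simp [tau]

lemma Hgroup_le_signedAffineGroup : Hgroup r s ≤ signedAffineGroup (ZMod r) (ZMod s) := by
  rw [Hgroup, Subgroup.closure_le]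
  rintro g (rfl | rfl | rfl)
  · exact ⟨1, 1, 1, 0, by rw [signedAffine_one_one, mu_eq_addRight]⟩
  · exact ⟨_, _, _, _, (sigmaNu_eq_signedAffine r s).symm⟩
  · exact ⟨_, _, _, _, (tau_eq_signedAffine r s).symm⟩

lemma mu_mem_Hgroup : mu r s ∈ Hgroup r s :=
  Subgroup.subset_closure (by simp)

lemma sigmaNu_mem_Hgroup : sigmaNu r s ∈ Hgroup r s :=
  Subgroup.subset_closure (by simp)

lemma nuSq_mem_Hgroup : nuSq r s ∈ Hgroup r s := by
  have h : nuSq r s = sigmaNu r s * sigmaNu r s := by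
    ext x <;> simp [nuSq, sigmaNu]; ring
  rw [h]
  exact mul_mem (sigmaNu_mem_Hgroup r s) (sigmaNu_mem_Hgroup r s)

lemma normalIn_closure_mu : NormalIn (Subgroup.closure {mu r s}) (Hgroup r s) := by
  refine normalIn_closure_singleton (mu_mem_Hgroup r s) fun h hh => ?_
  obtain ⟨e, d, a, b, rfl⟩ := Hgroup_le_signedAffineGroup r s hh
  refine Subgroup.mem_zpowers_iff.2 ⟨e, ?_⟩
  simp [mu_eq_addRight, signedAffine_conj_addRight, Equiv.zsmul_addRight, Units.smul_def]

lemma normalIn_closure_nuSq : NormalIn (Subgroup.closure {nuSq r s}) (Hgroup r s) := by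
  refine normalIn_closure_singleton (nuSq_mem_Hgroup r s) fun h hh => ?_
  obtain ⟨e, d, a, b, rfl⟩ := Hgroup_le_signedAffineGroup r s hh
  refine Subgroup.mem_zpowers_iff.2 ⟨d, ?_⟩
  simp [nuSq_eq_addRight, signedAffine_conj_addRight, Equiv.zsmul_addRight, Units.smul_def]

end Hgroup

section Translations

lemma mu_mem_of_addRight_mem {p s : ℕ} [Fact p.Prime]
    {N : Subgroup (Equiv.Perm (ZMod p × ZMod s))} {c : ZMod p} (hc : c ≠ 0)
    (h : Equiv.addRight (c, (0 : ZMod s)) ∈ N) : mu p s ∈ N := by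
  have hmu : mu p s = Equiv.addRight (c, (0 : ZMod s)) ^ (c⁻¹).val := by
    rw [Equiv.nsmul_addRight, mu_eq_addRight, Prod.smul_mk, smul_zero, nsmul_eq_mul,
      ZMod.natCast_zmod_val, inv_mul_cancel₀ hc]
  exact hmu ▸ pow_mem h _

lemma nuSq_mem_of_addRight_mem {r : ℕ} {N : Subgroup (Equiv.Perm (ZMod r × ZMod 4))}
    {b : ZMod 4} (hb : b ≠ 0) (h : Equiv.addRight ((0 : ZMod r), b) ∈ N) : nuSq r 4 ∈ N := by
  have hsq : Equiv.addRight ((0 : ZMod r), b) ^ 2 = Equiv.addRight (0, 2 • b) := by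
    rw [Equiv.nsmul_addRight, Prod.smul_mk, smul_zero]
  rw [nuSq_eq_addRight]
  rcases (by decide : ∀ b : ZMod 4, b ≠ 0 → b = 2 ∨ 2 • b = 2) b hb with rfl | h2
  · exact h
  · exact h2 ▸ hsq ▸ pow_mem h 2

lemma mu_notMem_closure_nuSq {p s : ℕ} [Fact p.Prime] : mu p s ∉ Subgroup.closure {nuSq p s} := by
  rw [← Subgroup.zpowers_eq_closure, Subgroup.mem_zpowers_iff, nuSq_eq_addRight, mu_eq_addRight]
  rintro ⟨k, hk⟩
  have := congrArg (fun g => (g 0).1) hk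
  simp [Equiv.zsmul_addRight] at this

lemma nuSq_notMem_closure_mu (r : ℕ) : nuSq r 4 ∉ Subgroup.closure {mu r 4} := by
  rw [← Subgroup.zpowers_eq_closure, Subgroup.mem_zpowers_iff, nuSq_eq_addRight, mu_eq_addRight]
  rintro ⟨k, hk⟩
  have := congrArg (fun g => (g 0).2) hk
  simp [Equiv.zsmul_addRight] at this
  exact absurd this (by decide)

end Translations

lemma two_ne_zero_of_odd_prime {p : ℕ} (hp : p.Prime) (hpo : Odd p) : (2 : ZMod p) ≠ 0 := by
  intro h
  have h2 : p ∣ 2 := (ZMod.natCast_eq_zero_iff 2 p).1 (by exact_mod_cast h)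
  rw [(Nat.prime_dvd_prime_iff_eq hp Nat.prime_two).1 h2] at hpo
  exact Nat.not_odd_iff_even.2 even_two hpo

theorem mu_mem_or_nuSq_mem {p : ℕ} (hp : p.Prime) (hpo : Odd p)
    {N : Subgroup (Equiv.Perm (ZMod p × ZMod 4))} (hN : NormalIn N (Hgroup p 4)) (hN1 : N ≠ ⊥) :
    mu p 4 ∈ N ∨ nuSq p 4 ∈ N := by
  have : Fact p.Prime := ⟨hp⟩
  have h2 := two_ne_zero_of_odd_prime hp hpo
  obtain ⟨m, hmN, hm1⟩ := (Subgroup.bot_or_exists_ne_one N).resolve_left hN1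
  obtain ⟨e, d, a, b, rfl⟩ := Hgroup_le_signedAffineGroup p 4 (hN.1 hmN)
  rcases Int.units_eq_one_or e with rfl | rfl
  · have hσν := hN.commutatorElement_mem (sigmaNu_mem_Hgroup p 4) hmN
    rw [sigmaNu_eq_signedAffine, commutatorElement_signedAffine] at hσν
    rcases Int.units_eq_one_or d with rfl | rfl
    · simp only [smul_zero, sub_self, Units.neg_smul, one_smul, sub_neg_eq_add, zero_sub,
        neg_add_rev] at hσν
      by_cases ha : a = 0
      · subst ha
        rw [signedAffine_one_one] at hmN hm1
        refine Or.inr (nuSq_mem_of_addRight_mem (fun hb => hm1 ?_) hmN)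
        rw [hb, Prod.mk_zero_zero, Equiv.addRight_zero]
      · refine Or.inl (mu_mem_of_addRight_mem ?_ hσν)
        rw [← neg_add, ← two_mul]
        exact neg_ne_zero.2 (mul_ne_zero h2 ha)
    · refine Or.inr ?_
      convert N.mul_mem (N.mul_mem hσν hmN) hmN using 1
      ext x <;> simp [nuSq]
      ring
  · have hμ := hN.commutatorElement_mem (mu_mem_Hgroup p 4) hmN
    rw [mu_eq_addRight, ← signedAffine_one_one, commutatorElement_signedAffine] at hμ
    simp only [Units.neg_smul, one_smul, sub_neg_eq_add, sub_self, sub_zero, smul_zero] at hμ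
    exact Or.inl (mu_mem_of_addRight_mem (by rwa [one_add_one_eq_two]) hμ)

/-- the minimal normal subgroups of `H(p,4)` are exactly `⟨μ⟩` and `⟨ν²⟩`. -/
theorem stmt14 (p : ℕ) (hp : p.Prime) (hpo : Odd p)
    (M : Subgroup (Equiv.Perm (ZMod p × ZMod 4))) :
    IsMinimalNormalIn M (Hgroup p 4) ↔
      (M = Subgroup.closure {mu p 4} ∨ M = Subgroup.closure {nuSq p 4}) := by
  have : Fact p.Prime := ⟨hp⟩
  exact isMinimalNormalIn_iff_of_forall_mem_or_mem (normalIn_closure_mu p 4)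
    (normalIn_closure_nuSq p 4) mu_notMem_closure_nuSq (nuSq_notMem_closure_mu p)
    fun N hN hN1 => mu_mem_or_nuSq_mem hp hpo hN hN1

end OG4
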